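/- arXiv:2105.06992 — 3 statements merged into one kernel-verified Lean document; each statement's English description precedes it below -/
import Mathlib

section
/- Let p > 0 and suppose H : ℕ → ℝ satisfies H(m) ≤ 2 m^(1+p) for all m < n, where n ≥ 1. If n_1,...,n_d are positive integers with ∑ n_i = n - 1 and each n_i < n, then 1 + ∑_i H(n_i) ≤ 2 n^(1+p). -/
/-!
Since `m ^ (1 + p) = m * m ^ p ≤ m * n ^ p` for `0 ≤ m ≤ n`, the subtree heights add up to at most
`2 (n - 1) n ^ p`, and the extra row for the root fits in the remaining `2 n ^ p ≥ 2`.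
-/

open Finset

theorem Real.rpow_one_add_le_mul_rpow {p m x : ℝ} (hp : 0 ≤ p) (hm : 0 ≤ m) (hmx : m ≤ x) :
    m ^ (1 + p) ≤ m * x ^ p := by
  rw [Real.rpow_add' hm (by positivity), Real.rpow_one]
  gcongr

theorem Real.sum_rpow_one_add_le {ι : Type*} {p x : ℝ} (hp : 0 ≤ p) (s : Finset ι) (f : ι → ℝ)
    (hf : ∀ i ∈ s, 0 ≤ f i) (hfx : ∀ i ∈ s, f i ≤ x) :
    ∑ i ∈ s, f i ^ (1 + p) ≤ (∑ i ∈ s, f i) * x ^ p := by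
  rw [sum_mul]
  exact sum_le_sum fun i hi => Real.rpow_one_add_le_mul_rpow hp (hf i hi) (hfx i hi)

theorem height_recurrence_typeI_general (p : ℝ) (hp : 0 < p) (n : ℕ) (hn : 1 ≤ n)
    (H : ℕ → ℝ) (hH : ∀ m : ℕ, m < n → H m ≤ 2 * (m : ℝ) ^ (1 + p))
    (d : ℕ) (ni : Fin d → ℕ)
    (hsum : ∑ i, ni i = n - 1) :
    1 + ∑ i, H (ni i) ≤ 2 * (n : ℝ) ^ (1 + p) := by
  have hle : ∀ i, ni i ≤ n - 1 := fun i => hsum ▸ single_le_sum (by simp) (mem_univ i)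
  have hsum_real : ∑ i, (ni i : ℝ) = n - 1 := by
    rw [← Nat.cast_sum, hsum, Nat.cast_sub hn, Nat.cast_one]
  have hsubtrees : ∑ i, (ni i : ℝ) ^ (1 + p) ≤ (n - 1) * (n : ℝ) ^ p := by
    rw [← hsum_real]
    refine Real.sum_rpow_one_add_le hp.le _ _ (fun i _ => by positivity) fun i _ => ?_
    exact_mod_cast (hle i).trans (Nat.sub_le n 1)
  have hroot : 1 ≤ (n : ℝ) ^ p := Real.one_le_rpow (by exact_mod_cast hn) hp.le
  calc 1 + ∑ i, H (ni i) ≤ 1 + ∑ i, 2 * (ni i : ℝ) ^ (1 + p) := by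
        gcongr with i
        exact hH _ (by have := hle i; omega)
    _ ≤ 1 + 2 * ((n - 1) * (n : ℝ) ^ p) := by rw [← mul_sum]; gcongr
    _ ≤ 2 * (n : ℝ) ^ (1 + p) := by
        rw [Real.rpow_add (by positivity), Real.rpow_one]
        linarith

theorem height_recurrence_typeI (p : ℝ) (hp : 0 < p) (n : ℕ) (hn : 1 ≤ n)
    (H : ℕ → ℝ) (hH : ∀ m : ℕ, m < n → H m ≤ 2 * (m : ℝ) ^ (1 + p))
    (d : ℕ) (ni : Fin d → ℕ) (hpos : ∀ i, 0 < ni i)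
    (hsum : ∑ i, ni i = n - 1) (hlt : ∀ i, ni i < n) :
    1 + ∑ i, H (ni i) ≤ 2 * (n : ℝ) ^ (1 + p) :=
  height_recurrence_typeI_general p hp n hn H hH d ni hsum
end

section
/- Let p = 0.48 and δ > 0 with (1+1+(2^(1-p)+0.5)^(1/(1-p))+0.5^(1/(1-p)))^(1-p) < 2.5(1-δ). Then there do not exist nonnegative reals a, b, L, R, M, B and n > 0 with a + b + M + B ≤ n, L ≤ M, R ≤ M, L + R ≤ M, satisfying M^p + B^p > (1-δ)n^p, R^p + a^p > (1-δ)n^p, and L^p + b^p > (1-δ)n^p. -/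
open Finset in
lemma holder_sum_aux {ι : Type*} (s : Finset ι) (c x : ι → ℝ) (p : ℝ)
    (hp0 : 0 < p) (hp1 : p < 1) (hc : ∀ i ∈ s, 0 ≤ c i) (hx : ∀ i ∈ s, 0 ≤ x i) :
    ∑ i ∈ s, c i * x i ^ p ≤ (∑ i ∈ s, c i ^ (1 / (1 - p))) ^ (1 - p) * (∑ i ∈ s, x i) ^ p := by
  have h1p : 0 < 1 - p := by linarith
  have hpq : Real.HolderConjugate (1 / (1 - p)) (1 / p) := by
    rw [Real.holderConjugate_iff]
    constructor
    · rw [lt_div_iff₀ h1p]; linarith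
    · rw [one_div, inv_inv, one_div, inv_inv]; ring
  have h := Real.inner_le_Lp_mul_Lq_of_nonneg s hpq hc
      (fun i hi => Real.rpow_nonneg (hx i hi) p)
  have e1 : (1:ℝ) / (1 / (1 - p)) = 1 - p := by field_simp
  have e2 : (1:ℝ) / (1 / p) = p := by field_simp
  rw [e1, e2] at h
  refine h.trans_eq ?_
  congr 2
  refine Finset.sum_congr rfl fun i hi => ?_
  rw [← Real.rpow_mul (hx i hi), mul_one_div, div_self hp0.ne', Real.rpow_one]

theorem case_A_contradiction (p δ : ℝ) (hp : p = 0.48) (hδ : 0 < δ)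
    (hconst : ((1:ℝ) + 1 + ((2:ℝ) ^ (1 - p) + 0.5) ^ (1 / (1 - p))
        + (0.5:ℝ) ^ (1 / (1 - p))) ^ (1 - p) < 2.5 * (1 - δ)) :
    ¬ ∃ (a b L R M B n : ℝ), 0 ≤ a ∧ 0 ≤ b ∧ 0 ≤ L ∧ 0 ≤ R ∧ 0 ≤ M ∧ 0 ≤ B ∧ 0 < n ∧
        a + b + M + B ≤ n ∧ L ≤ M ∧ R ≤ M ∧ L + R ≤ M ∧ L ^ p + R ^ p ≤ M ^ p * 2 ∧
        M ^ p + B ^ p > (1 - δ) * n ^ p ∧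
        R ^ p + a ^ p > (1 - δ) * n ^ p ∧
        L ^ p + b ^ p > (1 - δ) * n ^ p := by
  rintro ⟨a, b, L, R, M, B, n, ha, hb, hL, hR, hM, hB, hn, hsum, hLM, hRM, hLRM, -,
    h1, h2, h3⟩
  have hp0 : 0 < p := by rw [hp]; norm_num
  have hp1 : p < 1 := by rw [hp]; norm_num
  -- L^p + R^p ≤ 2^(1-p) * M^p
  have hLR : L ^ p + R ^ p ≤ 2 ^ (1 - p) * M ^ p := by
    have h2' := holder_sum_aux Finset.univ ![1, 1] ![L, R] p hp0 hp1
      (by intro i _; fin_cases i <;> norm_num)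
      (by intro i _; fin_cases i <;> simpa)
    simp [Fin.sum_univ_two] at h2'
    norm_num at h2'
    exact h2'.trans (mul_le_mul_of_nonneg_left
      (Real.rpow_le_rpow (by linarith) hLRM hp0.le) (by positivity))
  -- the 4-variable Hölder bound
  have h4 := holder_sum_aux Finset.univ ![1, 1, (2:ℝ) ^ (1 - p) + 0.5, 0.5] ![a, b, M, B]
    p hp0 hp1
    (by intro i _; fin_cases i <;> simp <;> positivity)
    (by intro i _; fin_cases i <;> simpa)
  simp only [Fin.sum_univ_four, Matrix.cons_val_zero, Matrix.cons_val_one, Matrix.head_cons,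
    Matrix.cons_val_two, Matrix.tail_cons, Matrix.cons_val_three, Real.one_rpow, one_mul] at h4
  set C : ℝ := ((1:ℝ) + 1 + ((2:ℝ) ^ (1 - p) + 0.5) ^ (1 / (1 - p))
      + (0.5:ℝ) ^ (1 / (1 - p))) ^ (1 - p) with hC
  have hCnn : 0 ≤ C := by
    rw [hC]; positivity
  have hnp : (0:ℝ) < n ^ p := Real.rpow_pos_of_pos hn p
  have habMB : (a + b + M + B) ^ p ≤ n ^ p := Real.rpow_le_rpow (by positivity) hsum hp0.le
  have h4' : a ^ p + b ^ p + ((2:ℝ) ^ (1 - p) + 0.5) * M ^ p + 0.5 * B ^ p ≤ C * n ^ p := by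
    refine le_trans ?_ (mul_le_mul_of_nonneg_left habMB hCnn)
    convert h4 using 2 <;> norm_num
  have k2 : C * n ^ p < 2.5 * (1 - δ) * n ^ p := mul_lt_mul_of_pos_right hconst hnp
  have expand : ((2:ℝ) ^ (1 - p) + 0.5) * M ^ p
      = (2:ℝ) ^ (1 - p) * M ^ p + 0.5 * M ^ p := by ring
  linarith
end

section
/- Let W : ℕ → ℝ be nondecreasing with W(1) = 1, and suppose there exist p ∈ (0,1) and δ ∈ (0,1) such that for every n ≥ 2, W(n) ≤ 1 + W(a) + W(b) for some nonnegative integers a, b < n with a^p + b^p ≤ (1-δ) n^p. Then there exists a constant c > 0 such that W(n) ≤ c n^p for all n ≥ 1. -/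
/-!
Take `c` so large that `c ≥ W 1` and `c δ ≥ 1 + 2K`, where `K ≥ W 0`, and prove `W n ≤ c n ^ p`
for `n ≥ 1` by strong induction. Every `m < n` satisfies `W m ≤ c m ^ p + K`, so the recurrence
gives `W n ≤ 1 + 2K + c (a ^ p + b ^ p) ≤ 1 + 2K + c (1 - δ) n ^ p`, and the loss `c δ n ^ p ≥ c δ`
absorbs the additive `1 + 2K`.
-/

open Real

namespace WidthRecurrence

variable {W : ℕ → ℝ} {p δ K c : ℝ}

theorem le_mul_rpow_add {m : ℕ} (hK : 0 ≤ K) (h0 : W 0 ≤ K) (hc0 : 0 ≤ c)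
    (hm : 1 ≤ m → W m ≤ c * (m : ℝ) ^ p) : W m ≤ c * (m : ℝ) ^ p + K := by
  rcases Nat.eq_zero_or_pos m with rfl | hm1
  · have : 0 ≤ c * ((0 : ℕ) : ℝ) ^ p := mul_nonneg hc0 (rpow_nonneg (Nat.cast_nonneg 0) p)
    linarith
  · linarith [hm hm1]

theorem le_mul_rpow_of_recurrence (hp : 0 ≤ p) (hK : 0 ≤ K) (h0 : W 0 ≤ K) (h1 : W 1 ≤ c)
    (hc0 : 0 ≤ c) (hc : 1 + 2 * K ≤ c * δ)
    (hrec : ∀ n : ℕ, 2 ≤ n → ∃ a b : ℕ, a < n ∧ b < n ∧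
      (a : ℝ) ^ p + (b : ℝ) ^ p ≤ (1 - δ) * (n : ℝ) ^ p ∧ W n ≤ 1 + W a + W b) :
    ∀ n : ℕ, 1 ≤ n → W n ≤ c * (n : ℝ) ^ p := by
  intro n
  induction n using Nat.strong_induction_on with
  | _ n ih =>
    intro hn
    rcases hn.eq_or_lt with rfl | hn2
    · simpa using h1
    obtain ⟨a, b, ha, hb, hab, hWn⟩ := hrec n hn2
    have hbound (m : ℕ) (hm : m < n) := le_mul_rpow_add hK h0 hc0 (ih m hm)
    have hnp : 1 ≤ (n : ℝ) ^ p := one_le_rpow (by exact_mod_cast hn) hp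
    calc W n ≤ 1 + (c * (a : ℝ) ^ p + K) + (c * (b : ℝ) ^ p + K) := by
          linarith [hbound a ha, hbound b hb]
      _ = 1 + 2 * K + c * ((a : ℝ) ^ p + (b : ℝ) ^ p) := by ring
      _ ≤ 1 + 2 * K + c * ((1 - δ) * (n : ℝ) ^ p) := by gcongr
      _ ≤ c * (n : ℝ) ^ p := by nlinarith

end WidthRecurrence

open WidthRecurrence

theorem width_recurrence_solution_general (W : ℕ → ℝ)
    (p δ : ℝ) (hp : 0 < p) (hδ0 : 0 < δ)
    (hrec : ∀ n : ℕ, 2 ≤ n → ∃ a b : ℕ, a < n ∧ b < n ∧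
      (a : ℝ) ^ p + (b : ℝ) ^ p ≤ (1 - δ) * (n : ℝ) ^ p ∧ W n ≤ 1 + W a + W b) :
    ∃ c : ℝ, 0 < c ∧ ∀ n : ℕ, 1 ≤ n → W n ≤ c * (n : ℝ) ^ p := by
  set K := max (W 0) 0
  have hc : 0 < (1 + 2 * K) / δ := by positivity
  refine ⟨max (W 1) ((1 + 2 * K) / δ), lt_max_of_lt_right hc,
    le_mul_rpow_of_recurrence hp.le (le_max_right _ _) (le_max_left _ _) (le_max_left _ _)
      (hc.le.trans (le_max_right _ _)) ?_ hrec⟩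
  calc 1 + 2 * K = (1 + 2 * K) / δ * δ := by field_simp
    _ ≤ max (W 1) ((1 + 2 * K) / δ) * δ := by gcongr; exact le_max_right _ _

theorem width_recurrence_solution (W : ℕ → ℝ) (hmono : Monotone W) (hW1 : W 1 = 1)
    (p δ : ℝ) (hp : 0 < p) (hp1 : p < 1) (hδ0 : 0 < δ) (hδ1 : δ < 1)
    (hrec : ∀ n : ℕ, 2 ≤ n → ∃ a b : ℕ, a < n ∧ b < n ∧
      (a : ℝ) ^ p + (b : ℝ) ^ p ≤ (1 - δ) * (n : ℝ) ^ p ∧ W n ≤ 1 + W a + W b) :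
    ∃ c : ℝ, 0 < c ∧ ∀ n : ℕ, 1 ≤ n → W n ≤ c * (n : ℝ) ^ p :=
  width_recurrence_solution_general W p δ hp hδ0 hrec
end
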